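/- For all α, β, γ > 0 with α ≥ γ, we have b(α,β,γ) ≥ b(γ,β,α), where b(α,β,γ) := ∂₁θ_log(β,γ)·α + ∂₂θ_log(β,γ)·β − θ_log(α,β). -/

import Mathlib

/-!
Differentiating under the integral sign, and substituting `p ↦ 1 - p` where needed, gives
`b(a, b, c) = ∫₀¹ a^p K(p) dp` with the kernel `K(p) = bKernel b (a * c) p`, that is
`K(p) = p b^(p-1) (ac)^(1-p) + (1-p) b^(p+1) (ac)^(-p) - b^(1-p)`.
The kernel depends on `a` and `c` only through `ac`, and it is nonnegative by the weighted
AM–GM inequality, whose geometric mean is exactly `b^(1-p)`. Hence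
`b(a, b, c) - b(c, b, a) = ∫₀¹ (a^p - c^p) K(p) dp ≥ 0` for `a ≥ c`.
-/

open Real

noncomputable def thetaLog (r s : ℝ) : ℝ := ∫ p in (0:ℝ)..1, r ^ (1 - p) * s ^ p

noncomputable def dtheta1 (r s : ℝ) : ℝ := deriv (fun u : ℝ => thetaLog u s) r

noncomputable def dtheta2 (r s : ℝ) : ℝ := deriv (fun v : ℝ => thetaLog r v) s

noncomputable def bfun (a b c : ℝ) : ℝ := dtheta1 b c * a + dtheta2 b c * b - thetaLog a b

noncomputable def b0fun (a b c : ℝ) : ℝ := dtheta1 b c * a + dtheta2 b c * b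

open MeasureTheory Set Metric

theorem hasDerivAt_intervalIntegral_of_continuousOn {E : Type*} [NormedAddCommGroup E]
    [NormedSpace ℝ E] {F F' : ℝ → ℝ → E} {U : Set ℝ} {x₀ a b : ℝ} (hU : IsOpen U)
    (hx₀ : x₀ ∈ U) (hF : ∀ x ∈ U, Continuous (F x))
    (hF' : ContinuousOn (fun z : ℝ × ℝ => F' z.1 z.2) (U ×ˢ univ))
    (hderiv : ∀ x ∈ U, ∀ t, HasDerivAt (F · t) (F' x t) x) :
    HasDerivAt (fun x => ∫ t in a..b, F x t) (∫ t in a..b, F' x₀ t) x₀ := by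
  obtain ⟨ε, hε, hεU⟩ := nhds_basis_closedBall.mem_iff.1 (hU.mem_nhds hx₀)
  have hK : IsCompact (closedBall x₀ ε ×ˢ uIcc a b) :=
    (isCompact_closedBall x₀ ε).prod isCompact_uIcc
  obtain ⟨C, hC⟩ := hK.exists_bound_of_continuousOn (hF'.mono (prod_mono hεU (subset_univ _)))
  refine (intervalIntegral.hasDerivAt_integral_of_dominated_loc_of_deriv_le (bound := fun _ => C)
    (ball_mem_nhds x₀ hε) ?_ ((hF x₀ hx₀).intervalIntegrable a b) ?_ ?_
    intervalIntegrable_const ?_).2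
  · filter_upwards [hU.mem_nhds hx₀] with x hx
    exact (hF x hx).aestronglyMeasurable
  · exact (hF'.comp_continuous (Continuous.prodMk_right x₀)
      fun t => ⟨hx₀, mem_univ t⟩).aestronglyMeasurable
  · exact ae_of_all _ fun t ht x hx =>
      hC (x, t) ⟨ball_subset_closedBall hx, uIoc_subset_uIcc ht⟩
  · exact ae_of_all _ fun t _ x hx => hderiv x (hεU (ball_subset_closedBall hx)) t

theorem intervalIntegral_comp_one_sub {E : Type*} [NormedAddCommGroup E] [NormedSpace ℝ E]
    (f : ℝ → E) : ∫ p in (0:ℝ)..1, f (1 - p) = ∫ p in (0:ℝ)..1, f p := by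
  simp

theorem thetaLog_comm (r s : ℝ) : thetaLog r s = thetaLog s r := by
  rw [thetaLog, ← intervalIntegral_comp_one_sub]
  simp only [sub_sub_cancel, mul_comm, thetaLog]

theorem hasDerivAt_thetaLog_left {r s : ℝ} (hr : 0 < r) (hs : 0 < s) :
    HasDerivAt (fun u => thetaLog u s) (∫ p in (0:ℝ)..1, (1 - p) * r ^ (-p) * s ^ p) r := by
  refine hasDerivAt_intervalIntegral_of_continuousOn (F := fun u p => u ^ (1 - p) * s ^ p)
    (F' := fun u p => (1 - p) * u ^ (-p) * s ^ p) isOpen_Ioi hr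
    (fun x (hx : 0 < x) => by fun_prop (disch := positivity)) ?_ fun x hx t => ?_
  · exact ((continuousOn_const.sub (by fun_prop)).mul (continuousOn_fst.rpow
      continuousOn_snd.neg fun z hz => Or.inl (mem_Ioi.1 hz.1).ne')).mul
      (by fun_prop (disch := positivity))
  · simpa [sub_sub_cancel_left] using
      ((hasDerivAt_rpow_const (p := 1 - t) (Or.inl (mem_Ioi.1 hx).ne')).mul_const (s ^ t))

theorem dtheta1_eq_integral {r s : ℝ} (hr : 0 < r) (hs : 0 < s) :
    dtheta1 r s = ∫ p in (0:ℝ)..1, p * r ^ (p - 1) * s ^ (1 - p) := by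
  rw [dtheta1, (hasDerivAt_thetaLog_left hr hs).deriv, ← intervalIntegral_comp_one_sub]
  simp only [sub_sub_cancel, neg_sub]

theorem dtheta2_eq_integral {r s : ℝ} (hr : 0 < r) (hs : 0 < s) :
    dtheta2 r s = ∫ p in (0:ℝ)..1, (1 - p) * s ^ (-p) * r ^ p := by
  simp only [dtheta2, thetaLog_comm r]
  exact (hasDerivAt_thetaLog_left hs hr).deriv

noncomputable def bKernel (b q p : ℝ) : ℝ :=
  p * b ^ (p - 1) * q ^ (1 - p) + (1 - p) * b ^ (p + 1) * q ^ (-p) - b ^ (1 - p)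

theorem bKernel_nonneg {b q p : ℝ} (hb : 0 < b) (hq : 0 < q) (hp₀ : 0 ≤ p) (hp₁ : p ≤ 1) :
    0 ≤ bKernel b q p := by
  have hgeom : (b ^ (p - 1) * q ^ (1 - p)) ^ p * (b ^ (p + 1) * q ^ (-p)) ^ (1 - p) =
      b ^ (1 - p) := by
    rw [mul_rpow (by positivity) (by positivity), mul_rpow (by positivity) (by positivity),
      ← rpow_mul hb.le, ← rpow_mul hq.le, ← rpow_mul hb.le, ← rpow_mul hq.le,
      mul_mul_mul_comm, ← rpow_add hb, ← rpow_add hq,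
      show (p - 1) * p + (p + 1) * (1 - p) = 1 - p by ring,
      show (1 - p) * p + -p * (1 - p) = 0 by ring, rpow_zero, mul_one]
  have hamgm := geom_mean_le_arith_mean2_weighted hp₀ (sub_nonneg.2 hp₁)
    (by positivity : 0 ≤ b ^ (p - 1) * q ^ (1 - p)) (by positivity : 0 ≤ b ^ (p + 1) * q ^ (-p))
    (add_sub_cancel p 1)
  rw [hgeom] at hamgm
  rw [bKernel]
  linarith

theorem bfun_integrand_eq {a b c p : ℝ} (ha : 0 < a) (hb : 0 < b) (hc : 0 < c) :
    p * b ^ (p - 1) * c ^ (1 - p) * a + (1 - p) * c ^ (-p) * b ^ p * b - b ^ (1 - p) * a ^ p =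
      a ^ p * bKernel b (a * c) p := by
  have h₁ : a ^ p * a ^ (1 - p) = a := by rw [← rpow_add ha, add_sub_cancel, rpow_one]
  have h₂ : a ^ p * a ^ (-p) = 1 := by rw [← rpow_add ha, add_neg_cancel, rpow_zero]
  rw [bKernel, mul_rpow ha.le hc.le, mul_rpow ha.le hc.le, rpow_add hb, rpow_one]
  linear_combination
    -(p * b ^ (p - 1) * c ^ (1 - p)) * h₁ - (1 - p) * b ^ p * b * c ^ (-p) * h₂

theorem bfun_eq_integral {a b c : ℝ} (ha : 0 < a) (hb : 0 < b) (hc : 0 < c) :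
    bfun a b c = ∫ p in (0:ℝ)..1, a ^ p * bKernel b (a * c) p := by
  have hcont₁ : Continuous fun p : ℝ => p * b ^ (p - 1) * c ^ (1 - p) * a := by
    fun_prop (disch := positivity)
  have hcont₂ : Continuous fun p : ℝ => (1 - p) * c ^ (-p) * b ^ p * b := by
    fun_prop (disch := positivity)
  have hcont₃ : Continuous fun p : ℝ => b ^ (1 - p) * a ^ p := by
    fun_prop (disch := positivity)
  rw [bfun, dtheta1_eq_integral hb hc, dtheta2_eq_integral hb hc, thetaLog_comm, thetaLog,
    ← intervalIntegral.integral_mul_const, ← intervalIntegral.integral_mul_const,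
    ← intervalIntegral.integral_add (hcont₁.intervalIntegrable 0 1)
      (hcont₂.intervalIntegrable 0 1),
    ← intervalIntegral.integral_sub
      ((hcont₁.intervalIntegrable 0 1).add (hcont₂.intervalIntegrable 0 1))
      (hcont₃.intervalIntegrable 0 1)]
  exact intervalIntegral.integral_congr fun p _ => bfun_integrand_eq ha hb hc

theorem bfun_mono (a b c : ℝ) (ha : 0 < a) (hb : 0 < b) (hc : 0 < c) (hac : a ≥ c) :
    bfun a b c ≥ bfun c b a := by
  have hcont : ∀ x, 0 < x → Continuous fun p : ℝ => x ^ p * bKernel b (a * c) p := by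
    intro x hx
    unfold bKernel
    fun_prop (disch := positivity)
  rw [bfun_eq_integral ha hb hc, bfun_eq_integral hc hb ha, mul_comm c a]
  refine intervalIntegral.integral_mono_on zero_le_one ((hcont c hc).intervalIntegrable 0 1)
    ((hcont a ha).intervalIntegrable 0 1) fun p hp => ?_
  exact mul_le_mul_of_nonneg_right (rpow_le_rpow hc.le hac hp.1)
    (bKernel_nonneg hb (mul_pos ha hc) hp.1 hp.2)
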